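/- Let n ≥ 3 be odd and suppose LTQ_{n−1} contains k pairwise edge-disjoint spanning trees, where k ≤ 2^{n−2}. Then LTQ_n contains k pairwise edge-disjoint spanning trees. -/

import Mathlib

/-- The adjacency relation of the locally twisted cube `LTQ_n`:
vertices are elements of `Fin (2^n)` (binary strings of length `n`, identified
with their decimal values); `u` and `v` are related iff either
(1) for some `2 ≤ i ≤ n-1`, `u_i = ¬v_i`, `u_{i-1} = v_{i-1} ⊕ u_0`, and
    `u_j = v_j` for all remaining bits `j`, or
(2) for some `i ∈ {0,1}`, `u_i = ¬v_i` and `u_j = v_j` for all remaining bits. -/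
def ltqRel (n : ℕ) (u v : Fin (2^n)) : Prop :=
  (∃ i, 2 ≤ i ∧ i ≤ n - 1 ∧
    (u : ℕ).testBit i = !(v : ℕ).testBit i ∧
    (u : ℕ).testBit (i-1) = xor ((v : ℕ).testBit (i-1)) ((u : ℕ).testBit 0) ∧
    ∀ j, j ≠ i → j ≠ i - 1 → (u : ℕ).testBit j = (v : ℕ).testBit j) ∨
  (∃ i, i ≤ 1 ∧
    (u : ℕ).testBit i = !(v : ℕ).testBit i ∧
    ∀ j, j ≠ i → (u : ℕ).testBit j = (v : ℕ).testBit j)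

/-- The `n`-dimensional locally twisted cube as a simple graph on `Fin (2^n)`. -/
def LTQ (n : ℕ) : SimpleGraph (Fin (2^n)) where
  Adj u v := ltqRel n u v ∨ ltqRel n v u
  symm := ⟨fun u v h => h.symm⟩
  loopless := ⟨by
    intro u h
    rcases h with (⟨i, _, _, h, _⟩ | ⟨i, _, h, _⟩) | (⟨i, _, _, h, _⟩ | ⟨i, _, h, _⟩) <;>
      simp at h⟩

/-!
`LTQ (m + 1)` consists of two copies of `LTQ m`, the vertices with top bit `0` and those with
top bit `1`, joined by a matching of edges of type (1) with `i = m`: `0x` is adjacent to `1y`,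
where `y` is `x` with bit `m - 1` flipped when `x` is odd. Copy each spanning tree `Tᵢ` of
`LTQ m` into both halves and join the two copies by the matching edge at the `i`-th vertex of
the lower half. The result is a spanning tree, and trees with distinct indices stay
edge-disjoint because their copies are and their matching edges differ.
-/

open SimpleGraph

namespace SimpleGraph

variable {V W : Type*} {G G' : SimpleGraph V} {H H' : SimpleGraph W}

lemma sum_mono (hG : G ≤ G') (hH : H ≤ H') : G ⊕g H ≤ G' ⊕g H' := by
  rintro (u | u) (v | v) h
  · exact hG h
  · nomatch h
  · nomatch h
  · exact hH h

lemma disjoint_sum (hG : Disjoint G G') (hH : Disjoint H H') :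
    Disjoint (G ⊕g H) (G' ⊕g H') := by
  rw [disjoint_iff_inf_le]
  rintro (u | u) (v | v) ⟨h, h'⟩
  · exact hG.le_bot ⟨h, h'⟩
  · nomatch h
  · nomatch h
  · exact hH.le_bot ⟨h, h'⟩

lemma disjoint_sum_sup_edge {v v' : V} {w w' : W} (hG : Disjoint G G') (hH : Disjoint H H')
    (hv : v ≠ v') :
    Disjoint ((G ⊕g H) ⊔ edge (Sum.inl v) (Sum.inr w))
      ((G' ⊕g H') ⊔ edge (Sum.inl v') (Sum.inr w')) := by
  have hedges : ¬(edge (Sum.inl v) (Sum.inr w)).Adj (Sum.inl v') (Sum.inr w') := by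
    simp [edge_adj, hv.symm]
  refine disjoint_sup_left.mpr ⟨disjoint_sup_right.mpr ⟨disjoint_sum hG hH, ?_⟩,
    disjoint_sup_right.mpr ⟨?_, (disjoint_edge _).mpr hedges⟩⟩
  · exact (disjoint_edge _).mpr (not_adj_sum_inl_inr _ _)
  · exact ((disjoint_edge _).mpr (not_adj_sum_inl_inr _ _)).symm

lemma card_edgeSet_sup_edge [Finite V] {u v : V} (hne : u ≠ v) (hnadj : ¬G.Adj u v) :
    Nat.card (G ⊔ edge u v).edgeSet = Nat.card G.edgeSet + 1 := by
  rw [edgeSet_sup, edgeSet_edge_of_ne hne, Set.union_singleton, Nat.card_coe_set_eq,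
    Set.ncard_insert_of_notMem ((G.mem_edgeSet).not.mpr hnadj), Nat.card_coe_set_eq]

lemma IsTree.sum_sup_edge [Finite V] [Finite W] (hG : G.IsTree) (hH : H.IsTree) (v : V) (w : W) :
    ((G ⊕g H) ⊔ edge (Sum.inl v) (Sum.inr w)).IsTree := by
  rw [isTree_iff_connected_and_card] at hG hH ⊢
  refine ⟨hG.1.sum_sup_edge hH.1, ?_⟩
  rw [card_edgeSet_sup_edge Sum.inl_ne_inr (not_adj_sum_inl_inr v w),
    Nat.card_congr edgeSetSumEquiv, Nat.card_sum, Nat.card_sum]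
  omega

lemma disjoint_map {f : V ↪ W} (h : Disjoint G G') : Disjoint (G.map f) (G'.map f) := by
  rw [← disjoint_edgeSet, edgeSet_map, edgeSet_map]
  exact (Set.disjoint_image_iff f.sym2Map.injective).mpr (disjoint_edgeSet.mpr h)

end SimpleGraph

lemma Nat.testBit_two_pow_add_of_lt {m x : ℕ} (hx : x < 2 ^ m) (j : ℕ) :
    (2 ^ m + x).testBit j = (decide (m = j) || x.testBit j) := by
  rw [← mul_one (2 ^ m), Nat.two_pow_add_eq_or_of_lt hx, mul_one, Nat.testBit_or,
    Nat.testBit_two_pow]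

def ltqHalves (m : ℕ) : Fin (2 ^ m) ⊕ Fin (2 ^ m) ≃ Fin (2 ^ (m + 1)) :=
  finSumFinEquiv.trans (finCongr (by rw [pow_succ, mul_two]))

@[simp] lemma val_ltqHalves_inl {m : ℕ} (x : Fin (2 ^ m)) :
    (ltqHalves m (Sum.inl x) : ℕ) = x := rfl

@[simp] lemma val_ltqHalves_inr {m : ℕ} (x : Fin (2 ^ m)) :
    (ltqHalves m (Sum.inr x) : ℕ) = 2 ^ m + x := rfl

lemma ltqRel_succ_of_testBit {m : ℕ} {u v : Fin (2 ^ m)} {a b : Fin (2 ^ (m + 1))}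
    (hau : ∀ j ≠ m, (a : ℕ).testBit j = (u : ℕ).testBit j)
    (hbv : ∀ j ≠ m, (b : ℕ).testBit j = (v : ℕ).testBit j)
    (hab : (a : ℕ).testBit m = (b : ℕ).testBit m) (h : ltqRel m u v) : ltqRel (m + 1) a b := by
  rcases h with ⟨i, hi2, him, hflip, htwist, hrest⟩ | ⟨i, hi1, hflip, hrest⟩
  · refine Or.inl ⟨i, hi2, by omega, ?_, ?_, fun j hji hji' => ?_⟩
    · rwa [hau i (by omega), hbv i (by omega)]
    · rwa [hau _ (by omega), hbv _ (by omega), hau 0 (by omega)]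
    · by_cases hjm : j = m
      · rwa [hjm]
      · rw [hau j hjm, hbv j hjm]; exact hrest j hji hji'
  · have him : i ≠ m := by
      rintro rfl
      rw [Nat.testBit_lt_two_pow u.2, Nat.testBit_lt_two_pow v.2] at hflip
      exact Bool.false_ne_true hflip
    refine Or.inr ⟨i, hi1, ?_, fun j hji => ?_⟩
    · rwa [hau i him, hbv i him]
    · by_cases hjm : j = m
      · rwa [hjm]
      · rw [hau j hjm, hbv j hjm]; exact hrest j hji

lemma ltq_adj_succ_of_testBit {m : ℕ} {u v : Fin (2 ^ m)} {a b : Fin (2 ^ (m + 1))}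
    (hau : ∀ j ≠ m, (a : ℕ).testBit j = (u : ℕ).testBit j)
    (hbv : ∀ j ≠ m, (b : ℕ).testBit j = (v : ℕ).testBit j)
    (hab : (a : ℕ).testBit m = (b : ℕ).testBit m) (h : (LTQ m).Adj u v) :
    (LTQ (m + 1)).Adj a b := by
  rcases h with h | h
  · exact Or.inl (ltqRel_succ_of_testBit hau hbv hab h)
  · exact Or.inr (ltqRel_succ_of_testBit hbv hau hab.symm h)

lemma ltq_sum_le_comap (m : ℕ) : (LTQ m ⊕g LTQ m) ≤ (LTQ (m + 1)).comap (ltqHalves m) := by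
  rintro (u | u) (v | v) h
  · refine ltq_adj_succ_of_testBit (fun j _ => rfl) (fun j _ => rfl) ?_ h
    simp [Nat.testBit_lt_two_pow u.2, Nat.testBit_lt_two_pow v.2]
  · nomatch h
  · nomatch h
  · refine ltq_adj_succ_of_testBit (fun j hj => ?_) (fun j hj => ?_) ?_ h
    · simp [Nat.testBit_two_pow_add_of_lt u.2, hj.symm]
    · simp [Nat.testBit_two_pow_add_of_lt v.2, hj.symm]
    · simp [Nat.testBit_two_pow_add_of_lt u.2, Nat.testBit_two_pow_add_of_lt v.2]

lemma exists_ltq_adj_inl_inr {m : ℕ} (hm : 2 ≤ m) (x : Fin (2 ^ m)) :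
    ∃ y, (LTQ (m + 1)).Adj (ltqHalves m (Sum.inl x)) (ltqHalves m (Sum.inr y)) := by
  let c : ℕ := if (x : ℕ).testBit 0 then 2 ^ (m - 1) else 0
  have hc : c < 2 ^ m := by
    have : 2 ^ (m - 1) < 2 ^ m := Nat.pow_lt_pow_right (by norm_num) (by omega)
    simp only [c]
    split_ifs
    exacts [this, by positivity]
  have hy : (x : ℕ) ^^^ c < 2 ^ m := Nat.xor_lt_two_pow x.2 hc
  refine ⟨⟨_, hy⟩, Or.inl (Or.inl ⟨m, hm, by omega, ?_, ?_, fun j hjm hjm' => ?_⟩)⟩ <;>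
    simp only [val_ltqHalves_inl, val_ltqHalves_inr, Nat.testBit_two_pow_add_of_lt hy,
      Nat.testBit_xor, c]
  · simp [Nat.testBit_lt_two_pow x.2]
  · cases (x : ℕ).testBit 0 <;> simp [show m ≠ m - 1 by omega]
  · cases (x : ℕ).testBit 0 <;> simp [Ne.symm hjm, Ne.symm hjm']

theorem ltq_odd_step_general (n k : ℕ) (hn : 3 ≤ n) (hk : k ≤ 2 ^ (n - 2))
    (T : Fin k → SimpleGraph (Fin (2^(n-1))))
    (hsub : ∀ i, T i ≤ LTQ (n-1)) (htree : ∀ i, (T i).IsTree)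
    (hdisj : ∀ i j, i ≠ j → Disjoint (T i).edgeSet (T j).edgeSet) :
    ∃ T' : Fin k → SimpleGraph (Fin (2^n)),
      (∀ i, T' i ≤ LTQ n) ∧ (∀ i, (T' i).IsTree) ∧
      (∀ i j, i ≠ j → Disjoint (T' i).edgeSet (T' j).edgeSet) := by
  obtain ⟨m, rfl⟩ : ∃ m, n = m + 1 := ⟨n - 1, by omega⟩
  choose twist htwist using exists_ltq_adj_inl_inr (m := m) (by omega)
  let x : Fin k ↪ Fin (2 ^ m) :=
    Fin.castLEEmb (hk.trans (Nat.pow_le_pow_right (by norm_num) (by omega)))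
  let glued (i : Fin k) : SimpleGraph (Fin (2 ^ m) ⊕ Fin (2 ^ m)) :=
    (T i ⊕g T i) ⊔ edge (Sum.inl (x i)) (Sum.inr (twist (x i)))
  refine ⟨fun i => (glued i).map (ltqHalves m), fun i => ?_, fun i => ?_, fun i j hij => ?_⟩
  · refine (map_le_iff_le_comap (ltqHalves m).toEmbedding _ _).mpr (sup_le ?_ ?_)
    · exact (sum_mono (hsub i) (hsub i)).trans (ltq_sum_le_comap m)
    · exact (edge_le_iff _).mpr (Or.inr (htwist (x i)))
  · exact (Iso.map (ltqHalves m) (glued i)).isTree_iff.mp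
      ((htree i).sum_sup_edge (htree i) _ _)
  · have hglued : Disjoint (glued i) (glued j) :=
      disjoint_sum_sup_edge (disjoint_edgeSet.mp (hdisj i j hij))
        (disjoint_edgeSet.mp (hdisj i j hij)) (x.injective.ne hij)
    exact disjoint_edgeSet.mpr (disjoint_map (f := (ltqHalves m).toEmbedding) hglued)

/-- For odd n ≥ 3: if LTQ_{n−1} contains k ≤ 2^(n−2) pairwise edge-disjoint
spanning trees, then so does LTQ_n. -/
theorem ltq_odd_step (n k : ℕ) (hn : 3 ≤ n) (hodd : Odd n) (hk : k ≤ 2 ^ (n - 2))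
    (T : Fin k → SimpleGraph (Fin (2^(n-1))))
    (hsub : ∀ i, T i ≤ LTQ (n-1)) (htree : ∀ i, (T i).IsTree)
    (hdisj : ∀ i j, i ≠ j → Disjoint (T i).edgeSet (T j).edgeSet) :
    ∃ T' : Fin k → SimpleGraph (Fin (2^n)),
      (∀ i, T' i ≤ LTQ n) ∧ (∀ i, (T' i).IsTree) ∧
      (∀ i j, i ≠ j → Disjoint (T' i).edgeSet (T' j).edgeSet) :=
  ltq_odd_step_general n k hn hk T hsub htree hdisj
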